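/- arXiv:2603.13980 — 4 statements merged into one kernel-verified Lean document; each statement's English description precedes it below -/
import Mathlib

section
/- Let A ∈ (0,1), p ∈ (0,1), ρ_A = [[(1+A)/2, −(i/2)√(1−A²)], [(i/2)√(1−A²), (1−A)/2]], and let ε_D be the dephasing channel with Kraus operators E₀ = √(1−p/2)·I, E₁ = √(p/2)·diag(1,−1). Set B = √(1 − (1−A²)(1−(p−1)²)). Then the decay of the relative entropy of imaginarity satisfies F_r(ρ_A) − F_r(ε_D(ρ_A)) = 1 − ((1+B)/2)·log₂(1+B) − ((1−B)/2)·log₂(1−B). -/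
open Matrix Kronecker BigOperators
open scoped ComplexOrder

noncomputable section

/-- A density matrix: positive semidefinite with trace 1. -/
def IsDensityMatrix {n : Type*} [Fintype n] [DecidableEq n] (ρ : Matrix n n ℂ) : Prop :=
  ρ.PosSemidef ∧ ρ.trace = 1

/-- The l₁-norm imaginarity measure: sum of |Im ρᵢⱼ| over off-diagonal entries. -/
noncomputable def Fl1 {n : Type*} [Fintype n] [DecidableEq n] (ρ : Matrix n n ℂ) : ℝ :=
  ∑ i, ∑ j, if i = j then 0 else |(ρ i j).im|

/-- The trace norm ‖M‖₁ = Tr √(M†M). -/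
noncomputable def traceNorm {n : Type*} [Fintype n] [DecidableEq n] (M : Matrix n n ℂ) : ℝ :=
  (((Matrix.posSemidef_conjTranspose_mul_self M).1.eigenvectorUnitary.1 *
      diagonal (((↑) : ℝ → ℂ) ∘ (√·) ∘ (Matrix.posSemidef_conjTranspose_mul_self M).1.eigenvalues) *
      (star (Matrix.posSemidef_conjTranspose_mul_self M).1.eigenvectorUnitary : Matrix n n ℂ)).trace).re

/-- The robustness of imaginarity: (1/2)‖ρ − ρᵀ‖₁. -/
noncomputable def FR {n : Type*} [Fintype n] [DecidableEq n] (ρ : Matrix n n ℂ) : ℝ :=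
  traceNorm (ρ - ρᵀ) / 2

/-- Von Neumann entropy (base-2), via eigenvalues of a Hermitian matrix
(junk value 0 if not Hermitian). -/
noncomputable def vnEntropy {n : Type*} [Fintype n] [DecidableEq n] (σ : Matrix n n ℂ) : ℝ :=
  if h : σ.IsHermitian then -∑ j, (h.eigenvalues j) * Real.logb 2 (h.eigenvalues j) else 0

/-- The relative entropy of imaginarity: S(Re ρ) − S(ρ), Re ρ = (ρ + ρᵀ)/2. -/
noncomputable def Fr {n : Type*} [Fintype n] [DecidableEq n] (ρ : Matrix n n ℂ) : ℝ :=
  vnEntropy ((1/2 : ℂ) • (ρ + ρᵀ)) - vnEntropy ρ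

/-- The canonical single-qubit state ρ_A. -/
noncomputable def rhoA (A : ℝ) : Matrix (Fin 2) (Fin 2) ℂ :=
  !![(((1 + A) / 2 : ℝ) : ℂ), -(Complex.I / 2) * (Real.sqrt (1 - A ^ 2) : ℂ);
     (Complex.I / 2) * (Real.sqrt (1 - A ^ 2) : ℂ), (((1 - A) / 2 : ℝ) : ℂ)]

/-- Density matrix of the maximal imaginary state |+⟩ = (|0⟩ + i|1⟩)/√2. -/
noncomputable def Mplus : Matrix (Fin 2) (Fin 2) ℂ :=
  (1/2 : ℂ) • !![1, -Complex.I; Complex.I, 1]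

/-- The dephasing channel. -/
noncomputable def dephasing (p : ℝ) (ρ : Matrix (Fin 2) (Fin 2) ℂ) : Matrix (Fin 2) (Fin 2) ℂ :=
  ((Real.sqrt (1 - p/2) : ℂ) • (1 : Matrix (Fin 2) (Fin 2) ℂ)) * ρ *
    ((Real.sqrt (1 - p/2) : ℂ) • (1 : Matrix (Fin 2) (Fin 2) ℂ))ᴴ +
  ((Real.sqrt (p/2) : ℂ) • !![1, 0; 0, -1]) * ρ * ((Real.sqrt (p/2) : ℂ) • !![1, 0; 0, -1])ᴴ

/-!
Write ρ_A = (I + A σ_z + √(1 − A²) σ_y)/2, a pure state with Bloch vector in the y–z plane.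
Both ρ ↦ Re ρ and the dephasing channel keep such states in that plane: the first sets the
y-component to 0, the second scales it by 1 − p. Since Re ε_D(ρ_A) = Re ρ_A, the decay of F_r
is S(ε_D(ρ_A)) − S(ρ_A) = S(ε_D(ρ_A)), and a qubit state with Bloch vector of length r has
eigenvalues (1 ± r)/2; here r = B.
-/

lemma eq_and_eq_or_eq_and_eq_of_add_eq_of_mul_eq {x y a b : ℝ} (hs : x + y = a + b)
    (hp : x * y = a * b) : (x = a ∧ y = b) ∨ (x = b ∧ y = a) := by
  have h : (x - a) * (x - b) = 0 := by linear_combination x * hs - hp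
  rcases mul_eq_zero.1 h with h | h
  · left; constructor <;> linarith
  · right; constructor <;> linarith

lemma vnEntropy_fin_two_of_trace_of_det {M : Matrix (Fin 2) (Fin 2) ℂ} (hM : M.IsHermitian)
    {a b : ℝ} (htr : M.trace = (a + b : ℝ)) (hdet : M.det = (a * b : ℝ)) :
    vnEntropy M = -(a * Real.logb 2 a + b * Real.logb 2 b) := by
  have hsum := hM.trace_eq_sum_eigenvalues
  have hprod := hM.det_eq_prod_eigenvalues
  rw [htr] at hsum
  rw [hdet] at hprod
  simp only [Fin.sum_univ_two, Fin.prod_univ_two] at hsum hprod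
  rw [vnEntropy, dif_pos hM, Fin.sum_univ_two]
  rcases eq_and_eq_or_eq_and_eq_of_add_eq_of_mul_eq
    (Complex.ofReal_injective (by simpa using hsum.symm))
    (Complex.ofReal_injective (by simpa using hprod.symm)) with ⟨h0, h1⟩ | ⟨h0, h1⟩
  · rw [h0, h1]
  · rw [h0, h1, add_comm]

/-- The entropy (in bits) of a qubit state whose Bloch vector has length `r`. -/
def blochEntropy (r : ℝ) : ℝ :=
  -((1 + r) / 2 * Real.logb 2 ((1 + r) / 2) + (1 - r) / 2 * Real.logb 2 ((1 - r) / 2))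

lemma blochEntropy_one : blochEntropy 1 = 0 := by
  simp [blochEntropy]

lemma half_mul_logb_half (x : ℝ) : x / 2 * Real.logb 2 (x / 2) = x / 2 * (Real.logb 2 x - 1) := by
  rcases eq_or_ne x 0 with rfl | hx
  · simp
  · rw [Real.logb_div hx two_ne_zero, Real.logb_self_eq_one one_lt_two]

lemma blochEntropy_eq (r : ℝ) :
    blochEntropy r = 1 - (1 + r) / 2 * Real.logb 2 (1 + r) - (1 - r) / 2 * Real.logb 2 (1 - r) := by
  rw [blochEntropy, half_mul_logb_half, half_mul_logb_half]
  ring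

/-- The qubit state (I + z σ_z + y σ_y)/2. -/
def yzState (z y : ℝ) : Matrix (Fin 2) (Fin 2) ℂ :=
  !![(((1 + z) / 2 : ℝ) : ℂ), -(Complex.I / 2) * (y : ℂ);
     (Complex.I / 2) * (y : ℂ), (((1 - z) / 2 : ℝ) : ℂ)]

lemma rhoA_eq_yzState (A : ℝ) : rhoA A = yzState A (Real.sqrt (1 - A ^ 2)) := rfl

section yzState

variable (z y : ℝ)

lemma yzState_isHermitian : (yzState z y).IsHermitian := by
  ext i j
  fin_cases i <;> fin_cases j <;>
    simp [yzState, Matrix.conjTranspose_apply, Complex.ext_iff] <;> ring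

lemma trace_yzState : (yzState z y).trace = 1 := by
  rw [yzState, trace_fin_two_of]
  push_cast
  ring

lemma det_yzState : (yzState z y).det = ((1 - z ^ 2 - y ^ 2) / 4 : ℝ) := by
  rw [yzState, det_fin_two_of]
  push_cast
  linear_combination (y ^ 2 / 4 : ℂ) * Complex.I_sq

lemma vnEntropy_yzState : vnEntropy (yzState z y) = blochEntropy (Real.sqrt (z ^ 2 + y ^ 2)) := by
  have hr := Real.sq_sqrt (add_nonneg (sq_nonneg z) (sq_nonneg y))
  refine vnEntropy_fin_two_of_trace_of_det (yzState_isHermitian z y) ?_ ?_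
  · rw [trace_yzState]
    push_cast
    ring
  · rw [det_yzState]
    congr 1
    linear_combination hr / 4

lemma transpose_yzState : (yzState z y)ᵀ = yzState z (-y) := by
  ext i j
  fin_cases i <;> fin_cases j <;> simp [yzState]

lemma realPart_yzState : (1 / 2 : ℂ) • (yzState z y + (yzState z y)ᵀ) = yzState z 0 := by
  rw [transpose_yzState]
  ext i j
  fin_cases i <;> fin_cases j <;> simp [yzState] <;> ring

lemma Fr_yzState :
    Fr (yzState z y) = blochEntropy |z| - blochEntropy (Real.sqrt (z ^ 2 + y ^ 2)) := by
  rw [Fr, realPart_yzState, vnEntropy_yzState, vnEntropy_yzState]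
  simp [Real.sqrt_sq_eq_abs]

lemma sigmaZ_mul_yzState_mul_sigmaZ :
    !![1, 0; 0, -1] * yzState z y * !![1, 0; 0, -1] = yzState z (-y) := by
  ext i j
  fin_cases i <;> fin_cases j <;> simp [yzState, Matrix.mul_apply, Fin.sum_univ_two]

lemma dephasing_yzState {p : ℝ} (hp0 : 0 ≤ p) (hp2 : p ≤ 2) :
    dephasing p (yzState z y) = yzState z (y * (1 - p)) := by
  have hZ : (!![1, 0; 0, -1] : Matrix (Fin 2) (Fin 2) ℂ)ᴴ = !![1, 0; 0, -1] := by
    ext i j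
    fin_cases i <;> fin_cases j <;> simp
  have hsq {t : ℝ} (ht : 0 ≤ t) : (Real.sqrt t : ℂ) * (Real.sqrt t : ℂ) = (t : ℂ) := by
    rw [← Complex.ofReal_mul, Real.mul_self_sqrt ht]
  simp only [dephasing, Matrix.conjTranspose_smul, hZ, Matrix.conjTranspose_one, Matrix.smul_mul,
    Matrix.mul_smul, smul_smul, Matrix.one_mul, Matrix.mul_one, Complex.star_def,
    Complex.conj_ofReal, hsq (by linarith : 0 ≤ 1 - p / 2), hsq (by linarith : 0 ≤ p / 2),
    sigmaZ_mul_yzState_mul_sigmaZ]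
  ext i j
  fin_cases i <;> fin_cases j <;> simp [yzState] <;> ring

end yzState

/-- decay of the relative entropy of imaginarity under the dephasing channel. -/
theorem decay_dephasing_relEnt (A p : ℝ) (hA0 : 0 < A) (hA1 : A < 1)
    (hp0 : 0 < p) (hp1 : p < 1) :
    Fr (rhoA A) - Fr (dephasing p (rhoA A))
      = 1 - ((1 + Real.sqrt (1 - (1 - A ^ 2) * (1 - (p - 1) ^ 2))) / 2)
              * Real.logb 2 (1 + Real.sqrt (1 - (1 - A ^ 2) * (1 - (p - 1) ^ 2)))
          - ((1 - Real.sqrt (1 - (1 - A ^ 2) * (1 - (p - 1) ^ 2))) / 2)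
              * Real.logb 2 (1 - Real.sqrt (1 - (1 - A ^ 2) * (1 - (p - 1) ^ 2))) := by
  have hs : Real.sqrt (1 - A ^ 2) ^ 2 = 1 - A ^ 2 := Real.sq_sqrt (by nlinarith)
  have hpure : A ^ 2 + Real.sqrt (1 - A ^ 2) ^ 2 = 1 := by rw [hs]; ring
  have hdephased : A ^ 2 + (Real.sqrt (1 - A ^ 2) * (1 - p)) ^ 2
      = 1 - (1 - A ^ 2) * (1 - (p - 1) ^ 2) := by rw [mul_pow, hs]; ring
  rw [rhoA_eq_yzState, dephasing_yzState _ _ hp0.le (by linarith), Fr_yzState, Fr_yzState,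
    hpure, hdephased, Real.sqrt_one, blochEntropy_one, sub_zero, sub_sub_cancel,
    blochEntropy_eq]
end
end

section
/- Let θ ∈ [0,π], φ ∈ [0,2π], and let |γ⟩ = cos(θ/2)|00⟩ + e^{iφ} sin(θ/2)|11⟩ be a two-qubit pure state with density matrix ρ = |γ⟩⟨γ|. Then there exists a real orthogonal 4×4 matrix O′ such that O′ ρ O′ᵀ equals the 4×4 matrix whose only nonzero entries are: (1+A)/2 at position (1,1), (1−A)/2 at position (4,4), −(i/2)√(1−A²) at position (1,4), and (i/2)√(1−A²) at position (4,1), where A = |⟨γ*|γ⟩| = |cos²(θ/2) + e^{2iφ} sin²(θ/2)|. -/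
open Matrix Kronecker BigOperators
open scoped ComplexOrder

noncomputable section

/-! A real orthogonal `O` satisfies `O ρ Oᵀ = (Oγ)(Oγ)†` and preserves the bilinear form `γᵀγ`.
After a global phase, `γᵀγ = A = |⟨γ*|γ⟩|` is real and nonnegative, so the real and imaginary parts
of `γ` are orthogonal with squared lengths `(1 ± A)/2`. Both lie in the plane spanned by `|00⟩` and
`|11⟩`, where a real orthogonal map sends them to `√((1+A)/2) |00⟩` and `√((1-A)/2) |11⟩`; extended
by the identity on the orthogonal complement, it brings `ρ` to the canonical form. -/

open Complex ComplexConjugate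

section ComplexVector

variable {m n : Type*}

theorem vecMulVec_smul_star_smul {c : ℂ} (hc : ‖c‖ = 1) (w : n → ℂ) :
    vecMulVec (c • w) (star (c • w)) = vecMulVec w (star w) := by
  ext i j
  have hcc : c * conj c = 1 := by rw [mul_conj, normSq_eq_norm_sq, hc]; simp
  simp only [vecMulVec_apply, Pi.smul_apply, Pi.star_apply, smul_eq_mul, star_mul', RCLike.star_def]
  linear_combination (w i * conj (w j)) * hcc

theorem of_mul_conj_eq_vecMulVec (w : n → ℂ) :
    Matrix.of (fun i j => w i * conj (w j)) = vecMulVec w (star w) :=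
  rfl

variable [Fintype n]

theorem map_ofReal_mul {l o : Type*} (L : Matrix l n ℝ) (M : Matrix n o ℝ) :
    (L * M).map ofReal = L.map ofReal * M.map ofReal :=
  Matrix.map_mul (f := ofRealHom)

theorem map_ofReal_mul_vecMulVec_mul_transpose (O : Matrix m n ℝ) (v : n → ℂ) :
    O.map ofReal * vecMulVec v (star v) * (O.map ofReal)ᵀ
      = vecMulVec (O.map ofReal *ᵥ v) (star (O.map ofReal *ᵥ v)) := by
  rw [mul_vecMulVec, vecMulVec_mul, star_mulVec, ← conjTranspose_map _ (fun _ => (conj_ofReal _).symm),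
    conjTranspose_eq_transpose_of_trivial, transpose_map]

theorem map_ofReal_mulVec (O : Matrix m n ℝ) (u : n → ℂ) :
    O.map ofReal *ᵥ u
      = fun i => ((O *ᵥ fun j => (u j).re) i : ℂ) + ((O *ᵥ fun j => (u j).im) i : ℂ) * I := by
  ext i
  apply Complex.ext <;> simp [mulVec, dotProduct, re_sum, im_sum]

theorem dotProduct_self_re (u : n → ℂ) :
    (u ⬝ᵥ u).re = (fun i => (u i).re) ⬝ᵥ (fun i => (u i).re)
      - (fun i => (u i).im) ⬝ᵥ (fun i => (u i).im) := by
  simp [dotProduct, re_sum, Finset.sum_sub_distrib]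

theorem dotProduct_self_im (u : n → ℂ) :
    (u ⬝ᵥ u).im = 2 * (fun i => (u i).re) ⬝ᵥ (fun i => (u i).im) := by
  simp only [dotProduct, im_sum, mul_im, Finset.mul_sum]
  exact Finset.sum_congr rfl fun i _ => by ring

theorem star_dotProduct_self_re (u : n → ℂ) :
    (star u ⬝ᵥ u).re = (fun i => (u i).re) ⬝ᵥ (fun i => (u i).re)
      + (fun i => (u i).im) ⬝ᵥ (fun i => (u i).im) := by
  simp [dotProduct, re_sum, Finset.sum_add_distrib]

theorem exists_norm_eq_one_dotProduct_smul_self (v : n → ℂ) :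
    ∃ c : ℂ, ‖c‖ = 1 ∧ (c • v) ⬝ᵥ (c • v) = ‖v ⬝ᵥ v‖ := by
  refine ⟨exp (↑(-(arg (v ⬝ᵥ v) / 2)) * I), norm_exp_ofReal_mul_I _, ?_⟩
  rw [dotProduct_smul, smul_dotProduct, smul_eq_mul, smul_eq_mul, ← mul_assoc, ← exp_add]
  have hz := norm_mul_exp_arg_mul_I (v ⬝ᵥ v)
  set z := v ⬝ᵥ v
  set a := arg z
  set r := ‖z‖
  rw [← hz, mul_left_comm, ← exp_add]
  have : ((-(a / 2) : ℝ) : ℂ) * I + ((-(a / 2) : ℝ) : ℂ) * I + a * I = 0 := by push_cast; ring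
  rw [this, exp_zero, mul_one]

end ComplexVector

theorem exists_orthogonal_mulVec_eq_axes (r t : Fin 2 → ℝ) (hr : r ≠ 0) (hrt : r ⬝ᵥ t = 0) :
    ∃ O : Matrix (Fin 2) (Fin 2) ℝ,
      O * Oᵀ = 1 ∧ O *ᵥ r = ![√(r ⬝ᵥ r), 0] ∧ O *ᵥ t = ![0, √(t ⬝ᵥ t)] := by
  have hrr : r ⬝ᵥ r = r 0 ^ 2 + r 1 ^ 2 := by simp [dotProduct, Fin.sum_univ_two, sq]
  have htt : t ⬝ᵥ t = t 0 ^ 2 + t 1 ^ 2 := by simp [dotProduct, Fin.sum_univ_two, sq]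
  rw [dotProduct, Fin.sum_univ_two] at hrt
  set a := √(r ⬝ᵥ r)
  set b := √(t ⬝ᵥ t)
  have ha : a ^ 2 = r 0 ^ 2 + r 1 ^ 2 := by rw [Real.sq_sqrt (by rw [hrr]; positivity), hrr]
  have hb : b ^ 2 = t 0 ^ 2 + t 1 ^ 2 := by rw [Real.sq_sqrt (by rw [htt]; positivity), htt]
  have ha0 : 0 < a := Real.sqrt_pos.mpr (by
    rw [hrr]
    contrapose! hr
    ext i; fin_cases i <;> simp <;> nlinarith)
  set d := r 0 * t 1 - r 1 * t 0
  have hd : |d| = a * b := by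
    rw [← sq_eq_sq₀ (abs_nonneg d) (by positivity), sq_abs, mul_pow, ha, hb]
    linear_combination -(hrt * (r 0 * t 0 + r 1 * t 1))
  -- `σ` chooses between a rotation and a reflection, so that `t` lands on the positive axis.
  set σ : ℝ := if 0 ≤ d then 1 else -1
  have hσd : σ * d = |d| := by
    simp only [σ]; split_ifs with h
    · rw [abs_of_nonneg h, one_mul]
    · rw [abs_of_neg (not_le.mp h)]; ring
  refine ⟨a⁻¹ • !![r 0, r 1; -σ * r 1, σ * r 0], ?_, ?_, ?_⟩
  · ext i j; fin_cases i <;> fin_cases j <;>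
      simp [Matrix.mul_apply, Fin.sum_univ_two] <;> field_simp <;> grind
  · ext i; fin_cases i <;> simp [mulVec, dotProduct, Fin.sum_univ_two] <;> field_simp <;> grind
  · ext i; fin_cases i <;> simp [mulVec, dotProduct, Fin.sum_univ_two] <;> field_simp <;> grind

theorem vecMulVec_star_eq_rhoA {a b : ℝ} (ha : 0 ≤ a) (hb : 0 ≤ b) (hab : a ^ 2 + b ^ 2 = 1) :
    vecMulVec ![(a : ℂ), I * b] (star ![(a : ℂ), I * b]) = rhoA (a ^ 2 - b ^ 2) := by
  have hsqrt : √(1 - (a ^ 2 - b ^ 2) ^ 2) = 2 * (a * b) := by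
    rw [show 1 - (a ^ 2 - b ^ 2) ^ 2 = (2 * (a * b)) ^ 2 by
      linear_combination (-(1 + a ^ 2 + b ^ 2)) * hab,
      Real.sqrt_sq (by positivity)]
  have habC : (a : ℂ) ^ 2 + (b : ℂ) ^ 2 = 1 := by exact_mod_cast hab
  ext i j; fin_cases i <;> fin_cases j <;> simp [rhoA, vecMulVec_apply, hsqrt]
  · linear_combination habC / 2
  · ring
  · ring
  · linear_combination habC / 2 - (b : ℂ) ^ 2 * I_sq

theorem exists_orthogonal_conj_eq_rhoA (v : Fin 2 → ℂ) (hv : star v ⬝ᵥ v = 1) :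
    ∃ O : Matrix (Fin 2) (Fin 2) ℝ, O * Oᵀ = 1 ∧
      O.map ofReal * vecMulVec v (star v) * (O.map ofReal)ᵀ = rhoA ‖v ⬝ᵥ v‖ := by
  obtain ⟨c, hc, hu⟩ := exists_norm_eq_one_dotProduct_smul_self v
  set u := c • v
  set r := fun i => (u i).re
  set t := fun i => (u i).im
  have hunit : r ⬝ᵥ r + t ⬝ᵥ t = 1 := by
    rw [← star_dotProduct_self_re, star_smul, smul_dotProduct, dotProduct_smul, hv, smul_eq_mul, smul_eq_mul, mul_one, RCLike.star_def, conj_mul', hc]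
    simp
  have hrr : 0 ≤ r ⬝ᵥ r := dotProduct_self_star_nonneg r
  have htt : 0 ≤ t ⬝ᵥ t := dotProduct_self_star_nonneg t
  have hdiff : r ⬝ᵥ r - t ⬝ᵥ t = ‖v ⬝ᵥ v‖ := by rw [← dotProduct_self_re, hu, ofReal_re]
  have hrt : r ⬝ᵥ t = 0 := by
    have := dotProduct_self_im u
    rw [hu, ofReal_im] at this
    linarith
  have hr : r ≠ 0 := by
    rintro h
    have : r ⬝ᵥ r = 0 := by rw [h, zero_dotProduct]
    linarith [norm_nonneg (v ⬝ᵥ v)]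
  obtain ⟨O, hO, hOr, hOt⟩ := exists_orthogonal_mulVec_eq_axes r t hr hrt
  refine ⟨O, hO, ?_⟩
  have hOu : O.map ofReal *ᵥ u = ![(√(r ⬝ᵥ r) : ℂ), I * √(t ⬝ᵥ t)] := by
    rw [map_ofReal_mulVec, hOr, hOt]
    ext i; fin_cases i <;> simp [mul_comm]
  rw [map_ofReal_mul_vecMulVec_mul_transpose, ← vecMulVec_smul_star_smul hc, ← mulVec_smul, hOu,
    vecMulVec_star_eq_rhoA (Real.sqrt_nonneg _) (Real.sqrt_nonneg _)
      (by rw [Real.sq_sqrt hrr, Real.sq_sqrt htt, hunit]),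
    Real.sq_sqrt hrr, Real.sq_sqrt htt, hdiff]

section IsometryExtension

variable {R : Type*} [CommRing R] {m n : Type*} [Fintype n] [DecidableEq m]
  (P : Matrix m n R) (O : Matrix n n R)

/-- `O` transported along the isometry `P`, extended by the identity on the orthogonal complement
of its range. -/
def isometryExtension : Matrix m m R := P * O * Pᵀ + (1 - P * Pᵀ)

theorem isometryExtension_transpose :
    (isometryExtension P O)ᵀ = P * Oᵀ * Pᵀ + (1 - P * Pᵀ) := by
  simp [isometryExtension, transpose_mul, Matrix.mul_assoc]

variable [Fintype m] [DecidableEq n]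

theorem isometryExtension_mul (hP : Pᵀ * P = 1) : isometryExtension P O * P = P * O := by
  simp only [isometryExtension, Matrix.add_mul, Matrix.sub_mul, Matrix.one_mul, Matrix.mul_assoc, hP,
    Matrix.mul_one, sub_self, add_zero]

theorem isometryExtension_mul_transpose (hP : Pᵀ * P = 1) (hO : O * Oᵀ = 1) :
    isometryExtension P O * (isometryExtension P O)ᵀ = 1 := by
  have hEP := isometryExtension_mul P O hP
  rw [isometryExtension_transpose, Matrix.mul_add, Matrix.mul_sub, Matrix.mul_one,
    ← Matrix.mul_assoc, ← Matrix.mul_assoc, hEP, ← Matrix.mul_assoc, hEP, Matrix.mul_assoc P O, hO,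
    Matrix.mul_one, isometryExtension]
  abel

end IsometryExtension

theorem isometryExtension_map_ofReal_conj {m n : Type*} [Fintype m] [Fintype n] [DecidableEq m]
    [DecidableEq n] (P : Matrix m n ℝ) (O : Matrix n n ℝ) (hP : Pᵀ * P = 1) (X : Matrix n n ℂ) :
    (isometryExtension P O).map ofReal * (P.map ofReal * X * (P.map ofReal)ᵀ)
        * ((isometryExtension P O).map ofReal)ᵀ
      = P.map ofReal * (O.map ofReal * X * (O.map ofReal)ᵀ) * (P.map ofReal)ᵀ := by
  calc _ = (isometryExtension P O * P).map ofReal * X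
        * ((isometryExtension P O * P).map ofReal)ᵀ := by
        simp only [map_ofReal_mul, transpose_mul, Matrix.mul_assoc]
    _ = _ := by
        rw [isometryExtension_mul P O hP]
        simp only [map_ofReal_mul, transpose_mul, Matrix.mul_assoc]

def blochState (θ φ : ℝ) : Fin 2 → ℂ :=
  ![(Real.cos (θ / 2) : ℂ), exp (I * φ) * Real.sin (θ / 2)]

theorem star_blochState_dotProduct_self (θ φ : ℝ) :
    star (blochState θ φ) ⬝ᵥ blochState θ φ = 1 := by
  have hφ : conj (exp (I * φ)) * exp (I * φ) = 1 := by
    rw [conj_mul', mul_comm, norm_exp_ofReal_mul_I, ofReal_one, one_pow]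
  have hθ : (Real.cos (θ / 2) : ℂ) ^ 2 + (Real.sin (θ / 2) : ℂ) ^ 2 = 1 := by
    exact_mod_cast Real.cos_sq_add_sin_sq (θ / 2)
  simp only [blochState, dotProduct, Fin.sum_univ_two, Pi.star_apply, cons_val_zero, cons_val_one,
    RCLike.star_def, map_mul, conj_ofReal]
  linear_combination (Real.sin (θ / 2) : ℂ) ^ 2 * hφ + hθ

theorem blochState_dotProduct_self (θ φ : ℝ) :
    blochState θ φ ⬝ᵥ blochState θ φ
      = (Real.cos (θ / 2) : ℂ) ^ 2 + exp (2 * I * φ) * (Real.sin (θ / 2) : ℂ) ^ 2 := by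
  simp only [blochState, dotProduct, Fin.sum_univ_two, cons_val_zero, cons_val_one]
  rw [show 2 * I * φ = I * φ + I * φ by ring, exp_add]
  ring

theorem exists_real_orthogonal_two_qubit_general (θ φ : ℝ) :
    ∃ O : Matrix (Fin 4) (Fin 4) ℂ,
      (∀ i j, (O i j).im = 0) ∧ O * Oᵀ = 1 ∧
      O * (Matrix.of fun i j =>
            (![((Real.cos (θ/2) : ℝ) : ℂ), 0, 0,
                Complex.exp (Complex.I * (φ : ℂ)) * ((Real.sin (θ/2) : ℝ) : ℂ)] i) *
            (starRingEnd ℂ)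
            (![((Real.cos (θ/2) : ℝ) : ℂ), 0, 0,
                Complex.exp (Complex.I * (φ : ℂ)) * ((Real.sin (θ/2) : ℝ) : ℂ)] j)) * Oᵀ
        = !![(((1 + ‖(((Real.cos (θ/2) : ℝ) : ℂ) ^ 2
                + Complex.exp (2 * Complex.I * (φ : ℂ)) * ((Real.sin (θ/2) : ℝ) : ℂ) ^ 2)‖) / 2 : ℝ) : ℂ),
              0, 0,
              -(Complex.I / 2) * (Real.sqrt (1 - ‖(((Real.cos (θ/2) : ℝ) : ℂ) ^ 2
                + Complex.exp (2 * Complex.I * (φ : ℂ)) * ((Real.sin (θ/2) : ℝ) : ℂ) ^ 2)‖ ^ 2) : ℂ);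
            0, 0, 0, 0;
            0, 0, 0, 0;
            (Complex.I / 2) * (Real.sqrt (1 - ‖(((Real.cos (θ/2) : ℝ) : ℂ) ^ 2
                + Complex.exp (2 * Complex.I * (φ : ℂ)) * ((Real.sin (θ/2) : ℝ) : ℂ) ^ 2)‖ ^ 2) : ℂ),
              0, 0,
              (((1 - ‖(((Real.cos (θ/2) : ℝ) : ℂ) ^ 2
                + Complex.exp (2 * Complex.I * (φ : ℂ)) * ((Real.sin (θ/2) : ℝ) : ℂ) ^ 2)‖) / 2 : ℝ) : ℂ)] := by
  obtain ⟨O₂, hO₂, hρ⟩ := exists_orthogonal_conj_eq_rhoA _ (star_blochState_dotProduct_self θ φ)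
  set P : Matrix (Fin 4) (Fin 2) ℝ := !![1, 0; 0, 0; 0, 0; 0, 1]
  have hP : Pᵀ * P = 1 := by
    ext i j; fin_cases i <;> fin_cases j <;> simp [P, Matrix.mul_apply, Fin.sum_univ_four]
  have hγ : ![(Real.cos (θ / 2) : ℂ), 0, 0, exp (I * φ) * Real.sin (θ / 2)]
      = P.map ofReal *ᵥ blochState θ φ := by
    ext i; fin_cases i <;> simp [P, blochState, mulVec, dotProduct]
  refine ⟨(isometryExtension P O₂).map ofReal, fun i j => ofReal_im _, ?_, ?_⟩
  · rw [← transpose_map, ← map_ofReal_mul, isometryExtension_mul_transpose P O₂ hP hO₂]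
    simp
  · rw [of_mul_conj_eq_vecMulVec, hγ, ← map_ofReal_mul_vecMulVec_mul_transpose,
      isometryExtension_map_ofReal_conj P O₂ hP, hρ, blochState_dotProduct_self]
    ext i j; fin_cases i <;> fin_cases j <;> simp [P, rhoA, Matrix.mul_apply]

/-- the two-qubit state cos(θ/2)|00⟩ + e^{iφ} sin(θ/2)|11⟩ can be brought
to the canonical form by a real orthogonal 4×4 matrix. -/
theorem exists_real_orthogonal_two_qubit (θ φ : ℝ) (hθ0 : 0 ≤ θ) (hθπ : θ ≤ Real.pi)
    (hφ0 : 0 ≤ φ) (hφ2π : φ ≤ 2 * Real.pi) :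
    ∃ O : Matrix (Fin 4) (Fin 4) ℂ,
      (∀ i j, (O i j).im = 0) ∧ O * Oᵀ = 1 ∧
      O * (Matrix.of fun i j =>
            (![((Real.cos (θ/2) : ℝ) : ℂ), 0, 0,
                Complex.exp (Complex.I * (φ : ℂ)) * ((Real.sin (θ/2) : ℝ) : ℂ)] i) *
            (starRingEnd ℂ)
            (![((Real.cos (θ/2) : ℝ) : ℂ), 0, 0,
                Complex.exp (Complex.I * (φ : ℂ)) * ((Real.sin (θ/2) : ℝ) : ℂ)] j)) * Oᵀ
        = !![(((1 + ‖(((Real.cos (θ/2) : ℝ) : ℂ) ^ 2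
                + Complex.exp (2 * Complex.I * (φ : ℂ)) * ((Real.sin (θ/2) : ℝ) : ℂ) ^ 2)‖) / 2 : ℝ) : ℂ),
              0, 0,
              -(Complex.I / 2) * (Real.sqrt (1 - ‖(((Real.cos (θ/2) : ℝ) : ℂ) ^ 2
                + Complex.exp (2 * Complex.I * (φ : ℂ)) * ((Real.sin (θ/2) : ℝ) : ℂ) ^ 2)‖ ^ 2) : ℂ);
            0, 0, 0, 0;
            0, 0, 0, 0;
            (Complex.I / 2) * (Real.sqrt (1 - ‖(((Real.cos (θ/2) : ℝ) : ℂ) ^ 2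
                + Complex.exp (2 * Complex.I * (φ : ℂ)) * ((Real.sin (θ/2) : ℝ) : ℂ) ^ 2)‖ ^ 2) : ℂ),
              0, 0,
              (((1 - ‖(((Real.cos (θ/2) : ℝ) : ℂ) ^ 2
                + Complex.exp (2 * Complex.I * (φ : ℂ)) * ((Real.sin (θ/2) : ℝ) : ℂ) ^ 2)‖) / 2 : ℝ) : ℂ)] :=
  exists_real_orthogonal_two_qubit_general θ φ
end
end

section
/- Let γ₁, γ₂ ∈ [0,1] and let ε_PD be the two-qubit phase damping channel with Kraus operators K_{ab} = E_a^{(γ₁)} ⊗ E_b^{(γ₂)} (a,b ∈ {0,1}), where E₀^{(γ)} = diag(1, √(1−γ)) and E₁^{(γ)} = diag(0, √γ). Then the l₁-norm imaginarity decay of the maximal imaginary state satisfies F_{l₁}(M₊ ⊗ M₊) − F_{l₁}(ε_PD(M₊ ⊗ M₊)) = 2 − √(1−γ₁) − √(1−γ₂). -/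
open Matrix Kronecker BigOperators
open scoped ComplexOrder

noncomputable section

/-- Single-qubit phase damping Kraus operators. -/
noncomputable def pdKraus (γ : ℝ) : Fin 2 → Matrix (Fin 2) (Fin 2) ℂ :=
  ![!![1, 0; 0, (Real.sqrt (1 - γ) : ℂ)], !![0, 0; 0, (Real.sqrt γ : ℂ)]]

/-- The two-qubit phase damping channel. -/
noncomputable def pd2 (γ₁ γ₂ : ℝ) (ρ : Matrix (Fin 2 × Fin 2) (Fin 2 × Fin 2) ℂ) :
    Matrix (Fin 2 × Fin 2) (Fin 2 × Fin 2) ℂ :=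
  ∑ a : Fin 2, ∑ b : Fin 2,
    (pdKraus γ₁ a ⊗ₖ pdKraus γ₂ b) * ρ * (pdKraus γ₁ a ⊗ₖ pdKraus γ₂ b)ᴴ

/-! Phase damping has diagonal Kraus operators, so it acts as a Schur multiplier: it keeps the
diagonal of a qubit state and multiplies the off-diagonal entries by `√(1 - γ)`. The two-qubit
channel acts factorwise on product states, so `M₊ ⊗ M₊ = dephasedPlus 1 ⊗ dephasedPlus 1` is sent
to `dephasedPlus √(1 - γ₁) ⊗ dephasedPlus √(1 - γ₂)`. The imaginary entries of
`dephasedPlus s ⊗ dephasedPlus t` are the four `± i s / 4` and the four `± i t / 4`, so its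
`F_{l₁}` is `|s| + |t|`. -/

namespace Matrix

variable {R ι κ m n : Type*} [CommSemiring R] [StarRing R] [Fintype ι] [Fintype κ]
  [Fintype m] [Fintype n]

def krausMap (K : ι → Matrix m m R) (ρ : Matrix m m R) : Matrix m m R :=
  ∑ a, K a * ρ * (K a)ᴴ

theorem krausMap_kronecker (A : ι → Matrix m m R) (B : κ → Matrix n n R)
    (ρ : Matrix m m R) (σ : Matrix n n R) :
    krausMap (fun p : ι × κ => A p.1 ⊗ₖ B p.2) (ρ ⊗ₖ σ) = krausMap A ρ ⊗ₖ krausMap B σ := by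
  simp only [krausMap, conjTranspose_kronecker, ← mul_kronecker_mul, Fintype.sum_prod_type]
  ext ⟨i, k⟩ ⟨j, l⟩
  simp only [kroneckerMap_apply, sum_apply, Finset.sum_mul_sum]

theorem krausMap_diagonal [DecidableEq m] (d : ι → m → R) (ρ : Matrix m m R) :
    krausMap (fun a => diagonal (d a)) ρ = (of fun i j => ∑ a, d a i * star (d a j)) ⊙ ρ := by
  ext i j
  simp [krausMap, sum_apply, diagonal_mul, mul_diagonal, Finset.sum_mul, mul_right_comm]

end Matrix

open Complex

theorem pd2_eq_krausMap (γ₁ γ₂ : ℝ) (ρ : Matrix (Fin 2 × Fin 2) (Fin 2 × Fin 2) ℂ) :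
    pd2 γ₁ γ₂ ρ = krausMap (fun p : Fin 2 × Fin 2 => pdKraus γ₁ p.1 ⊗ₖ pdKraus γ₂ p.2) ρ := by
  rw [krausMap, Fintype.sum_prod_type, pd2]

theorem pdKraus_eq_diagonal (γ : ℝ) :
    pdKraus γ = fun a => diagonal (![![1, (√(1 - γ) : ℂ)], ![0, (√γ : ℂ)]] a) := by
  funext a
  fin_cases a <;> simp [pdKraus, diagonal_fin_two]

theorem krausMap_pdKraus_apply {γ : ℝ} (h0 : 0 ≤ γ) (h1 : γ ≤ 1) (ρ : Matrix (Fin 2) (Fin 2) ℂ)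
    (i j : Fin 2) : krausMap (pdKraus γ) ρ i j = (if i = j then 1 else √(1 - γ)) * ρ i j := by
  have hsq : ((√(1 - γ) : ℝ) : ℂ) * √(1 - γ) + (√γ : ℝ) * √γ = 1 := by
    rw [← ofReal_mul, ← ofReal_mul, Real.mul_self_sqrt (by linarith), Real.mul_self_sqrt h0]
    push_cast; ring
  rw [pdKraus_eq_diagonal, krausMap_diagonal]
  fin_cases i <;> fin_cases j <;> simp [Fin.sum_univ_two, hsq]

def dephasedPlus (s : ℝ) : Matrix (Fin 2) (Fin 2) ℂ :=
  !![1 / 2, -(s * I / 2); s * I / 2, 1 / 2]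

theorem Mplus_eq_dephasedPlus_one : Mplus = dephasedPlus 1 := by
  ext i j; fin_cases i <;> fin_cases j <;> simp [Mplus, dephasedPlus] <;> ring

theorem krausMap_pdKraus_dephasedPlus {γ : ℝ} (h0 : 0 ≤ γ) (h1 : γ ≤ 1) (s : ℝ) :
    krausMap (pdKraus γ) (dephasedPlus s) = dephasedPlus (√(1 - γ) * s) := by
  ext i j
  rw [krausMap_pdKraus_apply h0 h1]
  fin_cases i <;> fin_cases j <;> simp [dephasedPlus] <;> ring

theorem Fl1_dephasedPlus_kronecker (s t : ℝ) :
    Fl1 (dephasedPlus s ⊗ₖ dephasedPlus t) = |s| + |t| := by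
  simp [Fl1, Fintype.sum_prod_type, Fin.sum_univ_two, dephasedPlus, abs_div]
  ring

/-- l₁-norm de-imaginary decay of M₊ ⊗ M₊ under two-qubit phase damping. -/
theorem pd2_l1_decay (γ₁ γ₂ : ℝ) (h₁0 : 0 ≤ γ₁) (h₁1 : γ₁ ≤ 1) (h₂0 : 0 ≤ γ₂) (h₂1 : γ₂ ≤ 1) :
    Fl1 (Mplus ⊗ₖ Mplus) - Fl1 (pd2 γ₁ γ₂ (Mplus ⊗ₖ Mplus))
      = 2 - Real.sqrt (1 - γ₁) - Real.sqrt (1 - γ₂) := by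
  rw [pd2_eq_krausMap, Mplus_eq_dephasedPlus_one, krausMap_kronecker,
    krausMap_pdKraus_dephasedPlus h₁0 h₁1, krausMap_pdKraus_dephasedPlus h₂0 h₂1,
    Fl1_dephasedPlus_kronecker, Fl1_dephasedPlus_kronecker, mul_one, mul_one, abs_one,
    abs_of_nonneg (Real.sqrt_nonneg _), abs_of_nonneg (Real.sqrt_nonneg _)]
  ring
end
end

section
/- Let p₁, p₂ ∈ [0,1] and let ε_DEP be the two-qubit depolarizing channel acting as ε_DEP(σ ⊗ τ) = (1−p₁)(1−p₂)·σ⊗τ + p₁(1−p₂)·(I/2)⊗τ + (1−p₁)p₂·σ⊗(I/2) + p₁p₂·(I/2)⊗(I/2), i.e., each qubit is independently replaced by the completely mixed state I/2 with probability p₁ (first qubit) and p₂ (second qubit). Then the decays of the maximal imaginary state satisfy F_{l₁}(M₊ ⊗ M₊) − F_{l₁}(ε_DEP(M₊ ⊗ M₊)) = p₁ + p₂ and F_R(M₊ ⊗ M₊) − F_R(ε_DEP(M₊ ⊗ M₊)) = (p₁ + p₂ − |p₁ − p₂|)/2. -/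
open Matrix Kronecker BigOperators
open scoped ComplexOrder

noncomputable section

/-- The two-qubit depolarizing channel, acting on product states: each qubit is
independently replaced by I/2 with probability p₁ (resp. p₂). -/
noncomputable def dep2 (p₁ p₂ : ℝ) (σ τ : Matrix (Fin 2) (Fin 2) ℂ) :
    Matrix (Fin 2 × Fin 2) (Fin 2 × Fin 2) ℂ :=
  (((1 - p₁) * (1 - p₂) : ℝ) : ℂ) • (σ ⊗ₖ τ)
  + ((p₁ * (1 - p₂) : ℝ) : ℂ) • (((1/2 : ℂ) • (1 : Matrix (Fin 2) (Fin 2) ℂ)) ⊗ₖ τ)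
  + (((1 - p₁) * p₂ : ℝ) : ℂ) • (σ ⊗ₖ ((1/2 : ℂ) • (1 : Matrix (Fin 2) (Fin 2) ℂ)))
  + ((p₁ * p₂ : ℝ) : ℂ) • (((1/2 : ℂ) • (1 : Matrix (Fin 2) (Fin 2) ℂ))
      ⊗ₖ ((1/2 : ℂ) • (1 : Matrix (Fin 2) (Fin 2) ℂ)))

/-!
Both states are products of qubit states `(1 + a Y) / 2`: the two-qubit depolarizing channel
factors into single-qubit ones, and these shrink `a` to `(1 - p) a`. For `ρ = ρ_a ⊗ ρ_b` the
l₁-imaginarity `|a| + |b|` is read off the entries, while `ρ - ρᵀ = (a/2) Y ⊗ 1 + (b/2) 1 ⊗ Y`.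
Since `Y ⊗ 1` and `1 ⊗ Y` are commuting Hermitian involutions, the positive square root of
`(ρ - ρᵀ)²` is an explicit combination of `1` and `Y ⊗ Y`, whose trace gives
`F_R(ρ) = (|a + b| + |a - b|) / 2`.
-/
def pauliY : Matrix (Fin 2) (Fin 2) ℂ := !![0, -Complex.I; Complex.I, 0]

lemma pauliY_mul_self : pauliY * pauliY = 1 := by
  ext i j
  fin_cases i <;> fin_cases j <;> simp [pauliY, Matrix.mul_apply]

lemma pauliY_conjTranspose : pauliYᴴ = pauliY := by
  ext i j
  fin_cases i <;> fin_cases j <;> simp [pauliY, Matrix.conjTranspose_apply]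

def yQubit (a : ℝ) : Matrix (Fin 2) (Fin 2) ℂ :=
  (1 / 2 : ℂ) • (1 + (a : ℂ) • pauliY)

def depolarize (p : ℝ) (σ : Matrix (Fin 2) (Fin 2) ℂ) : Matrix (Fin 2) (Fin 2) ℂ :=
  ((1 - p : ℝ) : ℂ) • σ + (p : ℂ) • ((1 / 2 : ℂ) • 1)

lemma dep2_eq_depolarize_kronecker (p₁ p₂ : ℝ) (σ τ : Matrix (Fin 2) (Fin 2) ℂ) :
    dep2 p₁ p₂ σ τ = depolarize p₁ σ ⊗ₖ depolarize p₂ τ := by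
  simp only [dep2, depolarize, add_kronecker, kronecker_add, smul_kronecker, kronecker_smul,
    smul_smul]
  module

lemma depolarize_yQubit (p a : ℝ) : depolarize p (yQubit a) = yQubit ((1 - p) * a) := by
  simp only [depolarize, yQubit, smul_add, smul_smul]
  push_cast
  module

lemma Mplus_eq_yQubit : Mplus = yQubit 1 := by
  ext i j
  fin_cases i <;> fin_cases j <;> simp [Mplus, yQubit, pauliY]

lemma Fl1_yQubit_kronecker (a b : ℝ) : Fl1 (yQubit a ⊗ₖ yQubit b) = |a| + |b| := by
  simp [Fl1, yQubit, pauliY, Fintype.sum_prod_type, Fin.sum_univ_two, kroneckerMap_apply,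
    Prod.ext_iff, abs_mul]
  ring

section TraceNorm

variable {n : Type*} [Fintype n] [DecidableEq n]

open scoped MatrixOrder in
lemma traceNorm_eq_re_trace_of_mul_self_eq {M S : Matrix n n ℂ} (hS : S.PosSemidef)
    (hSS : S * S = Mᴴ * M) : traceNorm M = S.trace.re := by
  have hMM := posSemidef_conjTranspose_mul_self M
  have hsqrt : CFC.sqrt (Mᴴ * M) = S := CFC.sqrt_unique hSS hS.nonneg
  rw [CFC.sqrt_eq_real_sqrt _ hMM.nonneg, cfcₙ_eq_cfc, hMM.1.cfc_eq, IsHermitian.cfc,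
    Unitary.conjStarAlgAut_apply] at hsqrt
  unfold traceNorm
  exact congrArg (fun X : Matrix n n ℂ => X.trace.re) hsqrt

lemma posSemidef_one_add_of_involutive {C : Matrix n n ℂ} (hC : Cᴴ = C) (hCC : C * C = 1) :
    (1 + C).PosSemidef := by
  have hsq : (1 + C)ᴴ * (1 + C) = (2 : ℝ) • (1 + C) := by
    simp only [conjTranspose_add, conjTranspose_one, hC, add_mul, mul_add, hCC, one_mul,
      mul_one]
    module
  have h : 1 + C = (1 / 2 : ℝ) • ((1 + C)ᴴ * (1 + C)) := by
    rw [hsq, smul_smul]; norm_num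
  rw [h]
  exact (posSemidef_conjTranspose_mul_self _).smul (by norm_num)

end TraceNorm

lemma traceNorm_pauliY_kronecker_sum (a b : ℝ) :
    traceNorm ((a : ℂ) • (pauliY ⊗ₖ 1) + (b : ℂ) • (1 ⊗ₖ pauliY)) = 2 * (|a + b| + |a - b|) := by
  set A : Matrix (Fin 2 × Fin 2) (Fin 2 × Fin 2) ℂ := pauliY ⊗ₖ 1
  set B : Matrix (Fin 2 × Fin 2) (Fin 2 × Fin 2) ℂ := 1 ⊗ₖ pauliY
  set C : Matrix (Fin 2 × Fin 2) (Fin 2 × Fin 2) ℂ := pauliY ⊗ₖ pauliY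
  have hAA : A * A = 1 := by simp [A, ← mul_kronecker_mul, pauliY_mul_self]
  have hBB : B * B = 1 := by simp [B, ← mul_kronecker_mul, pauliY_mul_self]
  have hCC : C * C = 1 := by simp [C, ← mul_kronecker_mul, pauliY_mul_self]
  have hAB : A * B = C := by simp [A, B, C, ← mul_kronecker_mul]
  have hBA : B * A = C := by simp [A, B, C, ← mul_kronecker_mul]
  have hAH : Aᴴ = A := by simp [A, conjTranspose_kronecker, pauliY_conjTranspose]
  have hBH : Bᴴ = B := by simp [B, conjTranspose_kronecker, pauliY_conjTranspose]
  have hCH : Cᴴ = C := by simp [C, conjTranspose_kronecker, pauliY_conjTranspose]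
  set x := |a + b|
  set y := |a - b|
  -- In a common eigenbasis of the commuting involutions `A`, `B` the matrix `a • A + b • B` is
  -- diagonal with entries `±(a + b)`, `±(a - b)`; `S` has their absolute values instead.
  set S := (((x + y) / 2 : ℝ) : ℂ) • 1 + (((x - y) / 2 : ℝ) : ℂ) • C
  have hS : S = ((x / 2 : ℝ) : ℂ) • (1 + C) + ((y / 2 : ℝ) : ℂ) • (1 + -C) := by
    simp only [S]; push_cast; module
  have hSpsd : S.PosSemidef := by
    rw [hS]
    exact ((posSemidef_one_add_of_involutive hCH hCC).smul (by positivity)).add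
      ((posSemidef_one_add_of_involutive (by rw [conjTranspose_neg, hCH])
        (by rw [neg_mul_neg, hCC])).smul (by positivity))
  have hSS : S * S = ((a : ℂ) • A + (b : ℂ) • B)ᴴ * ((a : ℂ) • A + (b : ℂ) • B) := by
    have hx : (x : ℂ) ^ 2 = ((a : ℂ) + b) ^ 2 := by exact_mod_cast sq_abs (a + b)
    have hy : (y : ℂ) ^ 2 = ((a : ℂ) - b) ^ 2 := by exact_mod_cast sq_abs (a - b)
    simp only [S, conjTranspose_add, conjTranspose_smul, hAH, hBH, Complex.star_def,
      Complex.conj_ofReal]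
    simp only [add_mul, mul_add, Matrix.smul_mul, Matrix.mul_smul, smul_smul, hAA, hAB, hBA, hBB,
      hCC, mul_one, one_mul]
    match_scalars
    · linear_combination (hx + hy) / 2
    · linear_combination (hx - hy) / 2
  have htrC : C.trace = 0 := by simp [C, trace_kronecker, pauliY, trace_fin_two]
  rw [traceNorm_eq_re_trace_of_mul_self_eq hSpsd hSS]
  simp [S, trace_add, trace_smul, htrC, Fintype.card_prod]
  ring

lemma yQubit_kronecker_sub_transpose (a b : ℝ) :
    yQubit a ⊗ₖ yQubit b - (yQubit a ⊗ₖ yQubit b)ᵀ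
      = ((a / 2 : ℝ) : ℂ) • (pauliY ⊗ₖ 1) + ((b / 2 : ℝ) : ℂ) • (1 ⊗ₖ pauliY) := by
  ext ⟨i, k⟩ ⟨j, l⟩
  fin_cases i <;> fin_cases k <;> fin_cases j <;> fin_cases l <;>
    simp [yQubit, pauliY, kroneckerMap_apply, one_apply] <;> ring

lemma FR_yQubit_kronecker (a b : ℝ) :
    FR (yQubit a ⊗ₖ yQubit b) = (|a + b| + |a - b|) / 2 := by
  rw [FR, yQubit_kronecker_sub_transpose, traceNorm_pauliY_kronecker_sum,
    ← add_div, ← sub_div, abs_div, abs_div, abs_two]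
  ring

theorem dep2_decays_general (p₁ p₂ : ℝ) (hp₁1 : p₁ ≤ 1) (hp₂1 : p₂ ≤ 1) :
    Fl1 (Mplus ⊗ₖ Mplus) - Fl1 (dep2 p₁ p₂ Mplus Mplus) = p₁ + p₂ ∧
    FR (Mplus ⊗ₖ Mplus) - FR (dep2 p₁ p₂ Mplus Mplus)
      = (p₁ + p₂ - |p₁ - p₂|) / 2 := by
  have h₁ : 0 ≤ 1 - p₁ := by linarith
  have h₂ : 0 ≤ 1 - p₂ := by linarith
  rw [dep2_eq_depolarize_kronecker, Mplus_eq_yQubit, depolarize_yQubit, depolarize_yQubit,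
    Fl1_yQubit_kronecker, Fl1_yQubit_kronecker, FR_yQubit_kronecker, FR_yQubit_kronecker]
  simp only [mul_one]
  rw [abs_of_nonneg h₁, abs_of_nonneg h₂, abs_of_nonneg (add_nonneg h₁ h₂),
    show 1 - p₁ - (1 - p₂) = -(p₁ - p₂) by ring, abs_neg]
  norm_num
  constructor <;> ring

/-- decays of F_{l₁} and F_R of M₊ ⊗ M₊ under the two-qubit
depolarizing channel. -/
theorem dep2_decays (p₁ p₂ : ℝ) (hp₁0 : 0 ≤ p₁) (hp₁1 : p₁ ≤ 1)
    (hp₂0 : 0 ≤ p₂) (hp₂1 : p₂ ≤ 1) :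
    Fl1 (Mplus ⊗ₖ Mplus) - Fl1 (dep2 p₁ p₂ Mplus Mplus) = p₁ + p₂ ∧
    FR (Mplus ⊗ₖ Mplus) - FR (dep2 p₁ p₂ Mplus Mplus)
      = (p₁ + p₂ - |p₁ - p₂|) / 2 :=
  dep2_decays_general p₁ p₂ hp₁1 hp₂1
end
end
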